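/- arXiv:1402.5391 — 7 statements merged into one kernel-verified Lean document; each statement's English description precedes it below -/
import Mathlib

section
/- Monotonicity of the ATO-POS transition function (Proposition 3.1): for every event a ∈ E and all states x, y ∈ X with x ≤ y in the componentwise order, f_P(x, a) ≤ f_P(y, a). -/
open MeasureTheory Finset ENNReal

namespace ATO

/-- Events: joint arrivals `d A` for subsets `A`, and services `s i j`. -/
inductive Ev (I : ℕ) where
  | d : Finset (Fin I) → Ev I
  | s : Fin I → ℕ → Ev I

instance (I : ℕ) : MeasurableSpace (Ev I) := ⊤

/-- Valid events: arrivals for nonempty `A`, services `s i j` with `1 ≤ j ≤ C i`. -/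
def ValidEv {I : ℕ} (C : Fin I → ℕ) : Ev I → Prop
  | .d A => A.Nonempty
  | .s i j => 1 ≤ j ∧ j ≤ C i

/-- The state space `X = {0,…,C 1} × ⋯ × {0,…,C I}`. -/
def Xspace {I : ℕ} (C : Fin I → ℕ) : Set (Fin I → ℕ) := {x | ∀ i, x i ≤ C i}

/-- ATO-POS transition function with individual replenishments. -/
noncomputable def fP {I : ℕ} (C : Fin I → ℕ) (μ : Fin I → ℕ → ℝ) (ℓ : Fin I → ℕ → ℕ)
    (x : Fin I → ℕ) : Ev I → (Fin I → ℕ)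
  | .d A => fun k => x k + if k ∈ A ∧ x k < C k then 1 else 0
  | .s i j => fun k => if k = i ∧ μ i (ℓ i j) ≤ μ i (x i) then x k - 1 else x k

/-- ATO-TOS transition function with individual replenishments. -/
noncomputable def fT {I : ℕ} (C : Fin I → ℕ) (μ : Fin I → ℕ → ℝ) (ℓ : Fin I → ℕ → ℕ)
    (x : Fin I → ℕ) : Ev I → (Fin I → ℕ)
  | .d A => fun k => x k + if k ∈ A ∧ (∀ i ∈ A, x i < C i) then 1 else 0
  | .s i j => fP C μ ℓ x (.s i j)

/-- Iterated application of a transition function along a word (head applied first). -/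
def iter {I : ℕ} {σ : Type*} (f : σ → Ev I → σ) : σ → List (Ev I) → σ
  | x, [] => x
  | x, a :: w => iter f (f x a) w

/-- The backward word `u_t u_{t-1} ⋯ u_1` (with `u_t` applied first). -/
def bword {I : ℕ} (ω : ℕ → Ev I) (t : ℕ) : List (Ev I) :=
  ((List.range t).reverse).map fun s => ω (s + 1)

/-- The forward word `u_1 u_2 ⋯ u_t` (with `u_1` applied first). -/
def fword {I : ℕ} (ω : ℕ → Ev I) (t : ℕ) : List (Ev I) :=
  (List.range t).map fun s => ω (s + 1)

/-- The distribution `ν` on events: `ν (d A) = λ_A / Λ`, `ν (s i j) = (μ_i(ℓ_i^{(j)}) − μ_i(ℓ_i^{(j-1)}))/Λ`. -/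
noncomputable def probA {I : ℕ} (C : Fin I → ℕ) (μ : Fin I → ℕ → ℝ) (ℓ : Fin I → ℕ → ℕ)
    (lam : Finset (Fin I) → ℝ) (Λ : ℝ) : Ev I → ℝ≥0∞
  | .d A => if A.Nonempty then ENNReal.ofReal (lam A / Λ) else 0
  | .s i j => if 1 ≤ j ∧ j ≤ C i then ENNReal.ofReal ((μ i (ℓ i j) - μ i (ℓ i (j - 1))) / Λ) else 0

/-- Proposition 3.1: monotonicity of the ATO-POS transition function. -/
theorem stmt0 (I : ℕ) (hI : 1 ≤ I) (C : Fin I → ℕ) (hC : ∀ i, 1 ≤ C i)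
    (μ : Fin I → ℕ → ℝ) (hμ0 : ∀ i, μ i 0 = 0) (hμnn : ∀ i k, k ≤ C i → 0 ≤ μ i k)
    (ℓ : Fin I → ℕ → ℕ) (hℓ : ∀ i, Set.BijOn (ℓ i) (Set.Iic (C i)) (Set.Iic (C i)))
    (hsort : ∀ i j, j < C i → μ i (ℓ i j) ≤ μ i (ℓ i (j + 1)))
    (a : Ev I) (ha : ValidEv C a)
    (x y : Fin I → ℕ) (hx : x ∈ Xspace C) (hy : y ∈ Xspace C) (hxy : x ≤ y) :
    fP C μ ℓ x a ≤ fP C μ ℓ y a := by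
  cases a with
  | d A =>
    intro k
    simp only [fP]
    split_ifs with h1 h2 h2
    · exact Nat.add_le_add_right (hxy k) 1
    · obtain ⟨h1a, h1b⟩ := h1
      push_neg at h2
      have hyC : y k = C k := le_antisymm (hy k) (h2 h1a)
      omega
    · have hk2 : x k ≤ y k := hxy k; omega
    · have hk2 : x k ≤ y k := hxy k; omega
  | s i j =>
    intro k
    simp only [fP]
    split_ifs with h1 h2 h2
    · exact Nat.sub_le_sub_right (hxy k) 1
    · exact le_trans (Nat.sub_le _ _) (hxy k)
    · obtain ⟨hki, hcy⟩ := h2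
      subst hki
      have hcx : ¬ μ k (ℓ k j) ≤ μ k (x k) := fun h => h1 ⟨rfl, h⟩
      have hne : x k ≠ y k := fun h => hcx (h ▸ hcy)
      have hk2 : x k ≤ y k := hxy k
      omega
    · exact hxy k

end ATO
end

section
/- The ATO-POS chain is componentwise coupling: for every i ∈ {1,…,I}, every t ≥ 0 and every word w ∈ E^t such that the set φ_i(f_P(X, w)) is a singleton (φ_i(x) = x_i), and for every further word w' ∈ E^s (s ≥ 0), the set φ_i(f_P(X, w w')) is also a singleton; i.e. once the grand coupling of all trajectories has coalesced in component i, it remains coalesced in component i after any additional events are applied. -/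
open MeasureTheory Finset ENNReal

namespace ATO

lemma step_comp {I : ℕ} (C : Fin I → ℕ) (μ : Fin I → ℕ → ℝ) (ℓ : Fin I → ℕ → ℕ)
    (i : Fin I) (a : Ev I) (x y : Fin I → ℕ) (h : x i = y i) :
    fP C μ ℓ x a i = fP C μ ℓ y a i := by
  cases a with
  | d A => simp [fP, h]
  | s i' j =>
    by_cases hi : i = i'
    · subst hi; simp [fP, h]
    · simpa [fP, hi] using h

lemma iter_comp {I : ℕ} (C : Fin I → ℕ) (μ : Fin I → ℕ → ℝ) (ℓ : Fin I → ℕ → ℕ)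
    (i : Fin I) (w : List (Ev I)) : ∀ x y : Fin I → ℕ, x i = y i →
    iter (fP C μ ℓ) x w i = iter (fP C μ ℓ) y w i := by
  induction w with
  | nil => intro x y h; simpa [iter] using h
  | cons a w ih =>
    intro x y h
    exact ih _ _ (step_comp C μ ℓ i a x y h)

lemma iter_append {I : ℕ} {σ : Type*} (f : σ → Ev I → σ) (w w' : List (Ev I)) :
    ∀ x, iter f x (w ++ w') = iter f (iter f x w) w' := by
  induction w with
  | nil => intro x; rfl
  | cons a w ih => intro x; simp [iter, ih]

/-- The ATO-POS chain is componentwise coupling: once the grand coupling has coalesced in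
component `i`, it stays coalesced in component `i` after any additional events. -/
theorem stmt2 (I : ℕ) (hI : 1 ≤ I) (C : Fin I → ℕ) (hC : ∀ i, 1 ≤ C i)
    (μ : Fin I → ℕ → ℝ) (hμ0 : ∀ i, μ i 0 = 0) (hμnn : ∀ i k, k ≤ C i → 0 ≤ μ i k)
    (ℓ : Fin I → ℕ → ℕ) (hℓ : ∀ i, Set.BijOn (ℓ i) (Set.Iic (C i)) (Set.Iic (C i)))
    (hsort : ∀ i j, j < C i → μ i (ℓ i j) ≤ μ i (ℓ i (j + 1)))
    (i : Fin I)
    (w : List (Ev I)) (hw : ∀ a ∈ w, ValidEv C a)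
    (hcoal : ∃ c : ℕ, (fun x => iter (fP C μ ℓ) x w i) '' Xspace C = {c})
    (w' : List (Ev I)) (hw' : ∀ a ∈ w', ValidEv C a) :
    ∃ c : ℕ, (fun x => iter (fP C μ ℓ) x (w ++ w') i) '' Xspace C = {c} := by
  obtain ⟨c, hc⟩ := hcoal
  have h0 : (fun _ => 0 : Fin I → ℕ) ∈ Xspace C := fun j => Nat.zero_le _
  refine ⟨iter (fP C μ ℓ) (iter (fP C μ ℓ) (fun _ => 0) w) w' i, ?_⟩
  ext n
  simp only [Set.mem_image, Set.mem_singleton_iff]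
  constructor
  · rintro ⟨x, hx, rfl⟩
    rw [iter_append]
    refine iter_comp C μ ℓ i w' _ _ ?_
    have hx' : iter (fP C μ ℓ) x w i = c := by
      have : iter (fP C μ ℓ) x w i ∈ (fun x => iter (fP C μ ℓ) x w i) '' Xspace C :=
        ⟨x, hx, rfl⟩
      rwa [hc] at this
    have h0' : iter (fP C μ ℓ) (fun _ => 0) w i = c := by
      have : iter (fP C μ ℓ) (fun _ => 0 : Fin I → ℕ) w i ∈
          (fun x => iter (fP C μ ℓ) x w i) '' Xspace C := ⟨_, h0, rfl⟩
      rwa [hc] at this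
    rw [hx', h0']
  · rintro rfl
    exact ⟨fun _ => 0, h0, by rw [iter_append]⟩


end ATO
end

section
/- Envelopes for ATO-TOS arrivals (Proposition 4.2): let A ⊆ {1,…,I} with |A| ≥ 2 and m ≤ M in X, and set m' = componentwise minimum and M' = componentwise maximum of the set {f_T(x, d_A) : x ∈ X, m ≤ x ≤ M}. Then: (I) if M_i < C_i for all i ∈ A, then m' = m + Σ_{i∈A} e_i and M' = M + Σ_{i∈A} e_i; (II) if m_{i_0} = C_{i_0} for some i_0 ∈ A, then m' = m and M' = M; (III) otherwise (there exists i_0 ∈ A with M_{i_0} = C_{i_0}, and m_i < C_i for all i ∈ A): M'_i = M_i + 1{i ∈ A and M_i < C_i} for every i, while m'_i = m_i for every i ≠ i_0 and m'_{i_0} = m_{i_0} + ∏_{k∈A∖{i_0}} 1{M_k < C_k}. -/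
/-!
Under TOS an arrival `d_A` sends `x` to `x + 1_A` when every buffer in `A` has room, and leaves it
fixed otherwise. So `f_T(·, d_A)` lies between the identity and the monotone POS arrival, and the
image of the box `[m, M]` lies in `[m, f_P(M, d_A)]`. If the whole box has room, or none of it has,
`f_T(·, d_A)` is monotone on the box and the envelopes are the images of `m` and `M`. Otherwise the
bounds are attained by `m` with a single coordinate `k` raised to `M_k`: raising a full coordinate
blocks the arrival, raising one with `M_k < C_k` keeps it possible.
-/

open MeasureTheory Finset ENNReal

namespace ATO

theorem _root_.Function.update_mem_Icc_of_le {ι : Type*} [DecidableEq ι] {α : ι → Type*}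
    [∀ i, Preorder (α i)] {m M : ∀ i, α i} (h : m ≤ M) (k : ι) :
    Function.update m k (M k) ∈ Set.Icc m M :=
  ⟨le_update_iff.2 ⟨h k, fun _ _ => le_rfl⟩, update_le_iff.2 ⟨le_rfl, fun j _ => h j⟩⟩

def HasRoom {I : ℕ} (C : Fin I → ℕ) (A : Finset (Fin I)) (x : Fin I → ℕ) : Prop :=
  ∀ i ∈ A, x i < C i

instance {I : ℕ} (C : Fin I → ℕ) (A : Finset (Fin I)) : DecidablePred (HasRoom C A) :=
  fun x => inferInstanceAs (Decidable (∀ i ∈ A, x i < C i))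

section Arrival

variable {I : ℕ} {C : Fin I → ℕ} {μ : Fin I → ℕ → ℝ} {ℓ : Fin I → ℕ → ℕ} {A : Finset (Fin I)}
  {x y m M m' M' : Fin I → ℕ}

theorem HasRoom.of_le (hy : HasRoom C A y) (hxy : x ≤ y) : HasRoom C A x :=
  fun i hi => (hxy i).trans_lt (hy i hi)

theorem HasRoom.update (hx : HasRoom C A x) {k : Fin I} {v : ℕ} (hv : v < C k) :
    HasRoom C A (Function.update x k v) := by
  intro i hi
  rcases eq_or_ne i k with rfl | hik
  · simpa using hv
  · simpa [hik] using hx i hi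

theorem not_hasRoom_of_le {k : Fin I} (hk : k ∈ A) (h : C k ≤ x k) : ¬HasRoom C A x :=
  fun hx => (hx k hk).not_ge h

theorem fT_d_apply (x : Fin I → ℕ) (p : Fin I) :
    fT C μ ℓ x (.d A) p = x p + if p ∈ A ∧ HasRoom C A x then 1 else 0 :=
  rfl

theorem fT_d_of_hasRoom (h : HasRoom C A x) :
    fT C μ ℓ x (.d A) = fun k => x k + if k ∈ A then 1 else 0 := by
  funext k
  simp [fT_d_apply, h]

theorem fT_d_of_not_hasRoom (h : ¬HasRoom C A x) : fT C μ ℓ x (.d A) = x := by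
  funext k
  simp [fT_d_apply, h]

theorem le_fT_d (x : Fin I → ℕ) : x ≤ fT C μ ℓ x (.d A) :=
  fun _ => Nat.le_add_right _ _

theorem fT_d_le_fP_d (x : Fin I → ℕ) : fT C μ ℓ x (.d A) ≤ fP C μ ℓ x (.d A) := by
  intro p
  simp only [fT_d_apply, fP]
  split_ifs with hT hP
  · exact le_rfl
  · exact absurd ⟨hT.1, hT.2 p hT.1⟩ hP
  · exact Nat.le_add_right _ _
  · exact le_rfl

theorem fP_d_monotone : Monotone fun x => fP C μ ℓ x (.d A) := by
  intro x y hxy p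
  simp only [fP]
  by_cases hp : p ∈ A
  · have hxyp : x p ≤ y p := hxy p
    simp only [hp, true_and]
    split_ifs <;> omega
  · simpa [hp] using hxy p

theorem fT_d_mem_Icc (hx : x ∈ Set.Icc m M) :
    fT C μ ℓ x (.d A) ∈ Set.Icc m (fP C μ ℓ M (.d A)) :=
  ⟨hx.1.trans (le_fT_d x), (fT_d_le_fP_d x).trans (fP_d_monotone hx.2)⟩

theorem envelopes_of_eqOn {g : (Fin I → ℕ) → Fin I → ℕ} (hg : Monotone g) (hmM : m ≤ M)
    (heq : Set.EqOn (fun x => fT C μ ℓ x (.d A)) g (Set.Icc m M))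
    (hm' : ∀ p, IsLeast ((fun x => fT C μ ℓ x (.d A) p) '' Set.Icc m M) (m' p))
    (hM' : ∀ p, IsGreatest ((fun x => fT C μ ℓ x (.d A) p) '' Set.Icc m M) (M' p)) :
    m' = g m ∧ M' = g M := by
  have himage (p : Fin I) :
      (fun x => fT C μ ℓ x (.d A) p) '' Set.Icc m M = (fun x => g x p) '' Set.Icc m M :=
    Set.image_congr fun x hx => congrFun (heq hx) p
  have hmono (p : Fin I) : MonotoneOn (fun x => g x p) (Set.Icc m M) :=
    fun x _ y _ hxy => hg hxy p
  refine ⟨funext fun p => ?_, funext fun p => ?_⟩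
  · exact (himage p ▸ hm' p).unique ((hmono p).map_isLeast (isLeast_Icc hmM))
  · exact (himage p ▸ hM' p).unique ((hmono p).map_isGreatest (isGreatest_Icc hmM))

theorem envelope_max_eq_fP_d (hmM : m ≤ M) (hm : HasRoom C A m) (hM : ¬HasRoom C A M)
    (hM' : ∀ p, IsGreatest ((fun x => fT C μ ℓ x (.d A) p) '' Set.Icc m M) (M' p)) :
    M' = fP C μ ℓ M (.d A) := by
  funext p
  refine (hM' p).unique ⟨?_, ?_⟩
  · by_cases hp : p ∈ A ∧ M p < C p
    · refine ⟨Function.update m p (M p), Function.update_mem_Icc_of_le hmM p, ?_⟩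
      simp [fT_d_apply, fP, hp, hm.update hp.2]
    · exact ⟨M, Set.right_mem_Icc.2 hmM, by simp [fT_d_apply, fP, hM, hp]⟩
  · rintro _ ⟨x, hx, rfl⟩
    exact (fT_d_mem_Icc hx).2 p

theorem envelope_min_apply_of_ne (hmM : m ≤ M) {k : Fin I} (hk : k ∈ A) (hMk : C k ≤ M k)
    (hm' : ∀ p, IsLeast ((fun x => fT C μ ℓ x (.d A) p) '' Set.Icc m M) (m' p))
    {i : Fin I} (hik : i ≠ k) : m' i = m i := by
  have hblocked : ¬HasRoom C A (Function.update m k (M k)) :=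
    not_hasRoom_of_le hk (by simpa using hMk)
  refine (hm' i).unique ⟨⟨_, Function.update_mem_Icc_of_le hmM k, ?_⟩, ?_⟩
  · simp [fT_d_apply, hblocked, hik]
  · rintro _ ⟨x, hx, rfl⟩
    exact (fT_d_mem_Icc hx).1 i

theorem envelope_min_apply_of_mem (hmM : m ≤ M) (hm : HasRoom C A m) {i : Fin I} (hi : i ∈ A)
    (hm' : ∀ p, IsLeast ((fun x => fT C μ ℓ x (.d A) p) '' Set.Icc m M) (m' p)) :
    m' i = m i + if ∀ k ∈ A, k ≠ i → M k < C k then 1 else 0 := by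
  split_ifs with hothers
  · refine (hm' i).unique ⟨⟨m, Set.left_mem_Icc.2 hmM, by simp [fT_d_apply, hi, hm]⟩, ?_⟩
    rintro _ ⟨x, hx, rfl⟩
    by_cases hroom : HasRoom C A x
    · simpa [fT_d_apply, hi, hroom] using hx.1 i
    · -- only coordinate `i` can block the arrival, so `x i` is full and hence above `m i`
      obtain ⟨k, hk, hCk⟩ : ∃ k ∈ A, C k ≤ x k := by simpa [HasRoom] using hroom
      obtain rfl : k = i := by
        by_contra hki
        exact (hx.2 k).not_gt ((hothers k hk hki).trans_le hCk)
      simpa [fT_d_apply, hroom] using (hm k hk).trans_le hCk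
  · obtain ⟨k, hk, hki, hMk⟩ : ∃ k ∈ A, k ≠ i ∧ C k ≤ M k := by simpa using hothers
    simpa using envelope_min_apply_of_ne hmM hk hMk hm' (Ne.symm hki)

end Arrival

theorem stmt6_general (I : ℕ) (C : Fin I → ℕ) (μ : Fin I → ℕ → ℝ) (ℓ : Fin I → ℕ → ℕ)
    (A : Finset (Fin I)) (m M : Fin I → ℕ) (hmM : m ≤ M)
    (m' M' : Fin I → ℕ)
    (hm' : ∀ p, IsLeast ((fun x => fT C μ ℓ x (.d A) p) '' Set.Icc m M) (m' p))
    (hM' : ∀ p, IsGreatest ((fun x => fT C μ ℓ x (.d A) p) '' Set.Icc m M) (M' p)) :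
    -- Case I
    ((∀ i ∈ A, M i < C i) →
      m' = (fun k => m k + if k ∈ A then 1 else 0) ∧
      M' = (fun k => M k + if k ∈ A then 1 else 0))
    -- Case II
    ∧ ((∃ i0 ∈ A, m i0 = C i0) → m' = m ∧ M' = M)
    -- Case III
    ∧ (((∃ i0 ∈ A, M i0 = C i0) ∧ ∀ i ∈ A, m i < C i) →
      ((∀ i, M' i = M i + if i ∈ A ∧ M i < C i then 1 else 0) ∧
        ∀ i0 ∈ A, M i0 = C i0 →
          ((∀ i, i ≠ i0 → m' i = m i) ∧
            m' i0 = m i0 + if ∀ k ∈ A, k ≠ i0 → M k < C k then 1 else 0))) := by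
  refine ⟨fun hM => ?_, fun ⟨i0, hi0, hmi0⟩ => ?_, fun ⟨⟨j0, hj0, hMj0⟩, hm⟩ => ⟨?_, ?_⟩⟩
  · exact envelopes_of_eqOn (g := fun x k => x k + if k ∈ A then 1 else 0)
      (fun x y hxy k => Nat.add_le_add_right (hxy k) _) hmM
      (fun x hx => fT_d_of_hasRoom (HasRoom.of_le hM hx.2)) hm' hM'
  · exact envelopes_of_eqOn monotone_id hmM
      (fun x hx => fT_d_of_not_hasRoom (not_hasRoom_of_le hi0 (hmi0 ▸ hx.1 i0))) hm' hM'
  · have hfull : ¬HasRoom C A M := not_hasRoom_of_le hj0 hMj0.ge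
    exact congrFun (envelope_max_eq_fP_d hmM hm hfull hM')
  · exact fun i0 hi0 hMi0 => ⟨fun _ hi => envelope_min_apply_of_ne hmM hi0 hMi0.ge hm' hi,
      envelope_min_apply_of_mem hmM hm hi0 hm'⟩

/-- Proposition 4.2: envelopes for ATO-TOS arrivals `d_A` with `|A| ≥ 2`. -/
theorem stmt6 (I : ℕ) (hI : 1 ≤ I) (C : Fin I → ℕ) (hC : ∀ i, 1 ≤ C i)
    (μ : Fin I → ℕ → ℝ) (hμ0 : ∀ i, μ i 0 = 0) (hμnn : ∀ i k, k ≤ C i → 0 ≤ μ i k)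
    (ℓ : Fin I → ℕ → ℕ) (hℓ : ∀ i, Set.BijOn (ℓ i) (Set.Iic (C i)) (Set.Iic (C i)))
    (hsort : ∀ i j, j < C i → μ i (ℓ i j) ≤ μ i (ℓ i (j + 1)))
    (A : Finset (Fin I)) (hA : 2 ≤ A.card)
    (m M : Fin I → ℕ) (hm : m ∈ Xspace C) (hM : M ∈ Xspace C) (hmM : m ≤ M)
    (m' M' : Fin I → ℕ)
    (hm' : ∀ p, IsLeast ((fun x => fT C μ ℓ x (.d A) p) '' Set.Icc m M) (m' p))
    (hM' : ∀ p, IsGreatest ((fun x => fT C μ ℓ x (.d A) p) '' Set.Icc m M) (M' p)) :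
    -- Case I
    ((∀ i ∈ A, M i < C i) →
      m' = (fun k => m k + if k ∈ A then 1 else 0) ∧
      M' = (fun k => M k + if k ∈ A then 1 else 0))
    -- Case II
    ∧ ((∃ i0 ∈ A, m i0 = C i0) → m' = m ∧ M' = M)
    -- Case III
    ∧ (((∃ i0 ∈ A, M i0 = C i0) ∧ ∀ i ∈ A, m i < C i) →
      ((∀ i, M' i = M i + if i ∈ A ∧ M i < C i then 1 else 0) ∧
        ∀ i0 ∈ A, M i0 = C i0 →
          ((∀ i, i ≠ i0 → m' i = m i) ∧
            m' i0 = m i0 + if ∀ k ∈ A, k ≠ i0 → M k < C k then 1 else 0))) :=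
  stmt6_general I C μ ℓ A m M hmM m' M' hm' hM'

end ATO
end

section
/- TOS dominated by POS (Lemma 4.2): for every event a ∈ E and all x, y ∈ X with x ≤ y in the componentwise order, f_T(x, a) ≤ f_P(y, a). -/
open MeasureTheory Finset ENNReal

namespace ATO

/-- Lemma 4.2: TOS dominated by POS. -/
theorem stmt7 (I : ℕ) (hI : 1 ≤ I) (C : Fin I → ℕ) (hC : ∀ i, 1 ≤ C i)
    (μ : Fin I → ℕ → ℝ) (hμ0 : ∀ i, μ i 0 = 0) (hμnn : ∀ i k, k ≤ C i → 0 ≤ μ i k)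
    (ℓ : Fin I → ℕ → ℕ) (hℓ : ∀ i, Set.BijOn (ℓ i) (Set.Iic (C i)) (Set.Iic (C i)))
    (hsort : ∀ i j, j < C i → μ i (ℓ i j) ≤ μ i (ℓ i (j + 1)))
    (a : Ev I) (ha : ValidEv C a)
    (x y : Fin I → ℕ) (hx : x ∈ Xspace C) (hy : y ∈ Xspace C) (hxy : x ≤ y) :
    fT C μ ℓ x a ≤ fP C μ ℓ y a := by
  intro k
  cases a with
  | d A =>
    simp only [fT, fP]
    by_cases h1 : k ∈ A ∧ (∀ i ∈ A, x i < C i)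
    · rw [if_pos h1]
      by_cases h2 : k ∈ A ∧ y k < C k
      · rw [if_pos h2]; exact Nat.add_le_add_right (hxy k) 1
      · rw [if_neg h2]
        have hnlt : ¬ y k < C k := fun h => h2 ⟨h1.1, h⟩
        have := hy k
        have := h1.2 k h1.1
        have hk : x k ≤ y k := hxy k
        omega
    · rw [if_neg h1]
      have hk : x k ≤ y k := hxy k
      split <;> omega
  | s i j =>
    simp only [fT, fP]
    by_cases h1 : k = i ∧ μ i (ℓ i j) ≤ μ i (x i)
    · rw [if_pos h1]
      have hk : x k ≤ y k := hxy k
      split <;> omega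
    · rw [if_neg h1]
      by_cases h2 : k = i ∧ μ i (ℓ i j) ≤ μ i (y i)
      · rw [if_pos h2]
        obtain ⟨hki, hle⟩ := h2
        subst hki
        have hne : x k ≠ y k := fun h => h1 ⟨rfl, h ▸ hle⟩
        have hk : x k ≤ y k := hxy k
        omega
      · rw [if_neg h2]; exact hxy k

end ATO
end

section
/- Sandwiching by aggregated envelopes (Proposition 5.1): for every n ∈ N, all y, z ∈ X with y ⪯ ψ(n) ⪯ z, every t ≥ 0 and every word w = a_1⋯a_s of events with 0 ≤ s ≤ t: F_inf([y,z], w) ⪯ ψ(f̃(n, w)) ⪯ F_sup([y,z], w), where f̃(n, w) denotes the iterated application of f̃ along w (a_1 first); in particular F_inf([y,z], w) ⪯ F_sup([y,z], w), so the envelope intervals remain nonempty along the trajectory. -/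
open MeasureTheory

namespace ATO

/-- Iterated application of a transition function along a word (head applied first). -/
def iterL {σ E : Type*} (f : σ → E → σ) : σ → List E → σ
  | x, [] => x
  | x, a :: w => iterL f (f x a) w

/-- Iteration of the aggregated envelope step along a word (head applied first). -/
def envIter {X E : Type*} (Finf Fsup : X → X → E → X) : X → X → List E → X × X
  | m, M, [] => (m, M)
  | m, M, a :: w => envIter Finf Fsup (Finf m M a) (Fsup m M a) w

/-- Proposition 5.1: the aggregated envelope chain sandwiches the projection of any
trajectory of the original chain; in particular the envelope intervals stay nonempty. -/
theorem stmt9 {N : Type*} [Fintype N] [Nonempty N] {E : Type*}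
    {X : Type*} [Lattice X] [Fintype X]
    (ftil : N → E → N) (ψ : N → X) (hsurj : Function.Surjective ψ)
    (finf fsup : X → E → X)
    (hfinf : ∀ x a, IsGLB ((fun n => ψ (ftil n a)) '' {n | ψ n = x}) (finf x a))
    (hfsup : ∀ x a, IsLUB ((fun n => ψ (ftil n a)) '' {n | ψ n = x}) (fsup x a))
    (Finf Fsup : X → X → E → X)
    (hFinf : ∀ m M a, IsGLB ((fun x => finf x a) '' Set.Icc m M) (Finf m M a))
    (hFsup : ∀ m M a, IsLUB ((fun x => fsup x a) '' Set.Icc m M) (Fsup m M a))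
    (n : N) (y z : X) (hy : y ≤ ψ n) (hz : ψ n ≤ z) (w : List E) :
    (envIter Finf Fsup y z w).1 ≤ ψ (iterL ftil n w)
    ∧ ψ (iterL ftil n w) ≤ (envIter Finf Fsup y z w).2
    ∧ (envIter Finf Fsup y z w).1 ≤ (envIter Finf Fsup y z w).2 := by
  induction w generalizing n y z with
  | nil => exact ⟨hy, hz, le_trans hy hz⟩
  | cons a w ih =>
    have h1 : Finf y z a ≤ ψ (ftil n a) := by
      refine le_trans ((hFinf y z a).1 ⟨ψ n, ⟨hy, hz⟩, rfl⟩) ?_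
      exact (hfinf (ψ n) a).1 ⟨n, rfl, rfl⟩
    have h2 : ψ (ftil n a) ≤ Fsup y z a := by
      refine le_trans ?_ ((hFsup y z a).1 ⟨ψ n, ⟨hy, hz⟩, rfl⟩)
      exact (hfsup (ψ n) a).1 ⟨n, rfl, rfl⟩
    exact ih (ftil n a) (Finf y z a) (Fsup y z a) h1 h2

end ATO
end

section
/- Correctness of the joint-service event representation (Lemma 6.1): for every n ∈ N, every i ∈ {1,…,I}, and every 0 ≤ k ≤ 2^{I−i}−1, the number of indices j ∈ {1,…,C_i} such that f̃(n, r_j^i) = n − ε_{A_k^i} equals n_{A_k^i}. Consequently, when each service event r_j^i has probability μ/Λ, the total probability of the transition n → n − ε_{A_k^i} under all service events is μ·n_{A_k^i}/Λ. -/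
open MeasureTheory Finset ENNReal

namespace ATO

/-- The detailed state space `N`: coordinates indexed by the nonempty subsets `A`
(the `∅` coordinate is forced to `0`), with `∑_{A ∋ i} n_A ≤ C_i` for every `i`. -/
def Nspace {I : ℕ} (C : Fin I → ℕ) : Set (Finset (Fin I) → ℕ) :=
  {n | n ∅ = 0 ∧ ∀ i, (∑ A ∈ Finset.univ.filter (fun A => i ∈ A), n A) ≤ C i}

/-- The projection `ψ : N → X`, `ψ(n)_i = ∑_{A ∋ i} n_A`. -/
def psi {I : ℕ} (n : Finset (Fin I) → ℕ) : Fin I → ℕ :=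
  fun i => ∑ A ∈ Finset.univ.filter (fun A => i ∈ A), n A

/-- The enumeration `A_k^i` of the subsets of `{i,…,I}` containing `i` (0-based indices):
an element `t > i` belongs to `A_k^i` iff the binary digit of `k` in position `I - 1 - t`
vanishes. -/
def Aset {I : ℕ} (i : Fin I) (k : ℕ) : Finset (Fin I) :=
  Finset.univ.filter (fun t => t = i ∨ (i < t ∧ Nat.testBit k (I - 1 - t.val) = false))

/-- Partial sums `∑_{ℓ=0}^{k-1} n_{A_ℓ^i}`. -/
def psum {I : ℕ} (i : Fin I) (n : Finset (Fin I) → ℕ) (k : ℕ) : ℕ :=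
  ∑ l ∈ Finset.range k, n (Aset i l)

/-- The transition function `f̃` of the detailed chain: a demand `d A` adds `ε_{A^{(n)}}`
where `A^{(n)} = {i ∈ A : ψ(n)_i < C_i}` (no change if `A^{(n)} = ∅`); a service `r_j^i`
removes `ε_{A_k^i}` for the minimal `k` with `∑_{ℓ=0}^{k} n_{A_ℓ^i} ≥ j`, if
`∑_{ℓ} n_{A_ℓ^i} ≥ j`, and otherwise does nothing. -/
noncomputable def ftil {I : ℕ} (C : Fin I → ℕ) (n : Finset (Fin I) → ℕ) :
    Ev I → (Finset (Fin I) → ℕ)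
  | .d A => fun B =>
      n B + if B = A.filter (fun i => psi n i < C i) ∧ B.Nonempty then 1 else 0
  | .s i j => fun B =>
      n B - if j ≤ psum i n (2 ^ (I - 1 - i.val))
              ∧ B = Aset i (sInf {k | j ≤ psum i n (k + 1)}) then 1 else 0

/-- The supremum chain `f̄` on `X` (componentwise supremum over all detailed states
projecting to `x`). -/
noncomputable def fbar {I : ℕ} (C : Fin I → ℕ) (x : Fin I → ℕ) (a : Ev I) : Fin I → ℕ :=
  fun p => sSup ((fun n => psi (ftil C n a) p) '' {n | n ∈ Nspace C ∧ psi n = x})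

/-- The infimum chain `f_inf` on `X` (componentwise infimum over all detailed states
projecting to `x`). -/
noncomputable def finf {I : ℕ} (C : Fin I → ℕ) (x : Fin I → ℕ) (a : Ev I) : Fin I → ℕ :=
  fun p => sInf ((fun n => psi (ftil C n a) p) '' {n | n ∈ Nspace C ∧ psi n = x})

/-- One step of the aggregated envelope chain `F([m,M],a)`. -/
noncomputable def Fenv {I : ℕ} (C : Fin I → ℕ) (m M : Fin I → ℕ) (a : Ev I) :
    (Fin I → ℕ) × (Fin I → ℕ) :=
  (fun p => sInf ((fun x => finf C x a p) '' Set.Icc m M),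
   fun p => sSup ((fun x => fbar C x a p) '' Set.Icc m M))

/-- Iteration of the aggregated envelope chain along a word (head applied first). -/
noncomputable def FenvIter {I : ℕ} (C : Fin I → ℕ) :
    (Fin I → ℕ) → (Fin I → ℕ) → List (Ev I) → (Fin I → ℕ) × (Fin I → ℕ)
  | m, M, [] => (m, M)
  | m, M, a :: w => FenvIter C (Fenv C m M a).1 (Fenv C m M a).2 w

/-- The "hat" operation `x̂_i = max{x_i − (x_1 + ⋯ + x_{i-1}), 0}`. -/
def xhat {I : ℕ} (x : Fin I → ℕ) (i : Fin I) : ℕ :=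
  x i - ∑ t ∈ Finset.univ.filter (fun t => t < i), x t

/-- The distribution `ν` on events: `ν (d A) = λ_A / Λ` and `ν (r_j^i) = μ / Λ`. -/
noncomputable def probJ {I : ℕ} (C : Fin I → ℕ) (lam : Finset (Fin I) → ℝ) (μv Λ : ℝ) :
    Ev I → ℝ≥0∞
  | .d A => if A.Nonempty then ENNReal.ofReal (lam A / Λ) else 0
  | .s i j => if 1 ≤ j ∧ j ≤ C i then ENNReal.ofReal (μv / Λ) else 0

/-! The service events `r_j^i`, `1 ≤ j ≤ C_i`, are matched against the consecutive blocks
`(psum k, psum (k + 1)]` of length `n_{A_k^i}`: `r_j^i` removes `ε_{A_k^i}` exactly when `j` lies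
in the `k`-th block, and these blocks fit below `C_i` because the `A_k^i` are distinct sets
containing `i`. A service at `i' ≠ i` never removes `A_k^i`, since `i'` is the least element of
every `A_ℓ^{i'}`. -/

abbrev Removes {I : ℕ} (C : Fin I → ℕ) (n : Finset (Fin I) → ℕ) (a : Ev I)
    (A : Finset (Fin I)) : Prop :=
  (fun B => (ftil C n a B : ℤ)) = fun B => (n B : ℤ) - if B = A then 1 else 0

lemma mem_Aset_self {I : ℕ} (i : Fin I) (k : ℕ) : i ∈ Aset i k := by
  simp [Aset]

lemma le_of_mem_Aset {I : ℕ} {i t : Fin I} {k : ℕ} (h : t ∈ Aset i k) : i ≤ t := by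
  simp only [Aset, Finset.mem_filter, Finset.mem_univ, true_and] at h
  rcases h with rfl | ⟨hit, -⟩
  exacts [le_rfl, hit.le]

lemma eq_of_Aset_eq {I : ℕ} {i i' : Fin I} {k k' : ℕ} (h : Aset i k = Aset i' k') : i = i' :=
  le_antisymm (le_of_mem_Aset (h.symm ▸ mem_Aset_self i' k'))
    (le_of_mem_Aset (h ▸ mem_Aset_self i k))

lemma Aset_injOn {I : ℕ} (i : Fin I) :
    Set.InjOn (Aset i) (Finset.range (2 ^ (I - 1 - i.val))) := by
  intro k hk k' hk' h
  simp only [Finset.coe_range, Set.mem_Iio] at hk hk'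
  apply Nat.eq_of_testBit_eq
  intro m
  by_cases hm : m < I - 1 - i.val
  · -- the digit `m` of `k` is read off the membership of `t = I - 1 - m` in `Aset i k`
    let t : Fin I := ⟨I - 1 - m, by omega⟩
    have hit : i < t := Fin.lt_def.mpr (by simp only [t]; omega)
    have hmt : I - 1 - t.val = m := by simp only [t]; omega
    have hmem := Finset.ext_iff.mp h t
    simp only [Aset, Finset.mem_filter, Finset.mem_univ, true_and, hit.ne', false_or, hit,
      hmt] at hmem
    cases hb : Nat.testBit k m <;> cases hb' : Nat.testBit k' m <;> simp_all
  · have hpow : 2 ^ (I - 1 - i.val) ≤ 2 ^ m := Nat.pow_le_pow_right two_pos (by omega)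
    rw [Nat.testBit_lt_two_pow (hk.trans_le hpow), Nat.testBit_lt_two_pow (hk'.trans_le hpow)]

lemma psum_mono {I : ℕ} (i : Fin I) (n : Finset (Fin I) → ℕ) : Monotone (psum i n) :=
  fun _ _ hab => Finset.sum_le_sum_of_subset (Finset.range_subset_range.mpr hab)

lemma psum_succ {I : ℕ} (i : Fin I) (n : Finset (Fin I) → ℕ) (k : ℕ) :
    psum i n (k + 1) = psum i n k + n (Aset i k) :=
  Finset.sum_range_succ _ _

lemma psum_le_of_mem_Nspace {I : ℕ} {C : Fin I → ℕ} {n : Finset (Fin I) → ℕ}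
    (hn : n ∈ Nspace C) (i : Fin I) : psum i n (2 ^ (I - 1 - i.val)) ≤ C i :=
  calc psum i n (2 ^ (I - 1 - i.val))
      = ∑ A ∈ (Finset.range (2 ^ (I - 1 - i.val))).image (Aset i), n A :=
        (Finset.sum_image (Aset_injOn i)).symm
    _ ≤ ∑ A ∈ Finset.univ.filter (fun A => i ∈ A), n A := by
        refine Finset.sum_le_sum_of_subset fun A hA => ?_
        obtain ⟨l, -, rfl⟩ := Finset.mem_image.mp hA
        simpa using mem_Aset_self i l
    _ ≤ C i := hn.2 i

lemma sInf_setOf_le_succ_eq_iff {p : ℕ → ℕ} (hp : Monotone p) {j K : ℕ} (h0 : p 0 < j)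
    (hK : j ≤ p K) (k : ℕ) :
    sInf {m | j ≤ p (m + 1)} = k ↔ p k < j ∧ j ≤ p (k + 1) := by
  set s := {m | j ≤ p (m + 1)}
  constructor
  · rintro rfl
    refine ⟨?_, Nat.sInf_mem (s := s) ⟨K, hK.trans (hp K.le_succ)⟩⟩
    rcases Nat.eq_zero_or_eq_succ_pred (sInf s) with h | h
    · rwa [h]
    · rw [h]
      exact not_le.mp (Nat.notMem_of_lt_sInf (s := s) (by omega))
  · rintro ⟨hlt, hle⟩
    refine le_antisymm (Nat.sInf_le hle) (not_lt.mp fun hsInf => hlt.not_ge ?_)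
    exact (Nat.sInf_mem (s := s) ⟨k, hle⟩).trans (hp (Nat.succ_le_of_lt hsInf))

lemma removes_service_iff {I : ℕ} {C : Fin I → ℕ} {n : Finset (Fin I) → ℕ} {i : Fin I}
    {j : ℕ} {A : Finset (Fin I)} :
    Removes C n (.s i j) A ↔
      0 < n A ∧ j ≤ psum i n (2 ^ (I - 1 - i.val))
        ∧ A = Aset i (sInf {k | j ≤ psum i n (k + 1)}) := by
  constructor
  · intro h
    have hA := congrFun h A
    simp only [ftil, if_true] at hA
    split_ifs at hA with hc
    · exact ⟨by omega, hc⟩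
    · omega
  · rintro ⟨hpos, hc⟩
    funext B
    simp only [ftil]
    by_cases hB : B = A
    · subst hB
      rw [if_pos hc, if_pos rfl]
      omega
    · rw [if_neg fun h => hB (h.2.trans hc.2.symm), if_neg hB]
      omega

lemma not_removes_service_Aset_of_ne {I : ℕ} {C : Fin I → ℕ} {n : Finset (Fin I) → ℕ}
    {i i' : Fin I} (hne : i' ≠ i) (j k : ℕ) : ¬ Removes C n (.s i' j) (Aset i k) :=
  fun h => hne (eq_of_Aset_eq (removes_service_iff.mp h).2.2).symm

lemma removes_service_Aset_iff {I : ℕ} {C : Fin I → ℕ} {n : Finset (Fin I) → ℕ}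
    {i : Fin I} {j k : ℕ} (hj : 1 ≤ j) (hk : k < 2 ^ (I - 1 - i.val)) :
    Removes C n (.s i j) (Aset i k) ↔ j ∈ Finset.Ioc (psum i n k) (psum i n (k + 1)) := by
  have h0 : psum i n 0 < j := by simp only [psum, Finset.range_zero, Finset.sum_empty]; omega
  rw [removes_service_iff, Finset.mem_Ioc]
  constructor
  · rintro ⟨-, htot, hA⟩
    have hfirst : sInf {k | j ≤ psum i n (k + 1)} < 2 ^ (I - 1 - i.val) := by
      have hpow := Nat.one_le_two_pow (n := I - 1 - i.val)
      have := Nat.sInf_le (s := {k | j ≤ psum i n (k + 1)})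
        (m := 2 ^ (I - 1 - i.val) - 1) (by simpa [Nat.sub_add_cancel hpow] using htot)
      omega
    have hkfirst := Aset_injOn i (by simpa using hk) (by simpa using hfirst) hA
    exact (sInf_setOf_le_succ_eq_iff (psum_mono i n) h0 htot k).mp hkfirst.symm
  · rintro ⟨hlt, hle⟩
    have hfirst := (sInf_setOf_le_succ_eq_iff (psum_mono i n) h0 hle k).mpr ⟨hlt, hle⟩
    refine ⟨?_, hle.trans (psum_mono i n hk), congrArg (Aset i) hfirst.symm⟩
    have := psum_succ i n k
    omega

lemma filter_removes_service_Aset {I : ℕ} {C : Fin I → ℕ} {n : Finset (Fin I) → ℕ}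
    (hn : n ∈ Nspace C) {i : Fin I} {k : ℕ} (hk : k < 2 ^ (I - 1 - i.val)) :
    (Finset.Icc 1 (C i)).filter (fun j => Removes C n (.s i j) (Aset i k))
      = Finset.Ioc (psum i n k) (psum i n (k + 1)) := by
  ext j
  rw [Finset.mem_filter, Finset.mem_Icc]
  constructor
  · rintro ⟨⟨hj, -⟩, h⟩
    exact (removes_service_Aset_iff hj hk).mp h
  · intro h
    have hj : 1 ≤ j := by rw [Finset.mem_Ioc] at h; omega
    refine ⟨⟨hj, ?_⟩, (removes_service_Aset_iff hj hk).mpr h⟩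
    exact (Finset.mem_Ioc.mp h).2.trans ((psum_mono i n hk).trans (psum_le_of_mem_Nspace hn i))

lemma card_filter_removes_service_Aset {I : ℕ} {C : Fin I → ℕ} {n : Finset (Fin I) → ℕ}
    (hn : n ∈ Nspace C) {i : Fin I} {k : ℕ} (hk : k < 2 ^ (I - 1 - i.val)) :
    ((Finset.Icc 1 (C i)).filter (fun j => Removes C n (.s i j) (Aset i k))).card
      = n (Aset i k) := by
  rw [filter_removes_service_Aset hn hk, Nat.card_Ioc, psum_succ, Nat.add_sub_cancel_left]

theorem stmt10_general (I : ℕ) (C : Fin I → ℕ)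
    (n : Finset (Fin I) → ℕ) (hn : n ∈ Nspace C)
    (i : Fin I) (k : ℕ) (hk : k < 2 ^ (I - 1 - i.val)) :
    ((Finset.Icc 1 (C i)).filter (fun j =>
        (fun B => (ftil C n (.s i j) B : ℤ))
          = (fun B => (n B : ℤ) - if B = Aset i k then 1 else 0))).card
      = n (Aset i k)
    ∧ ∀ lam : Finset (Fin I) → ℝ, ∀ μv Λ : ℝ,
      (∑ i' : Fin I, ∑ j ∈ Finset.Icc 1 (C i'),
        (if (fun B => (ftil C n (.s i' j) B : ℤ))
              = (fun B => (n B : ℤ) - if B = Aset i k then 1 else 0)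
          then probJ C lam μv Λ (.s i' j) else 0))
        = (n (Aset i k) : ℝ≥0∞) * ENNReal.ofReal (μv / Λ) := by
  have hcard := card_filter_removes_service_Aset hn hk
  refine ⟨hcard, fun lam μv Λ => ?_⟩
  change ∑ i' : Fin I, ∑ j ∈ Finset.Icc 1 (C i'),
      (if Removes C n (.s i' j) (Aset i k) then probJ C lam μv Λ (.s i' j) else 0) = _
  rw [Finset.sum_eq_single_of_mem i (Finset.mem_univ i) fun i' _ hne =>
    Finset.sum_eq_zero fun j _ => if_neg (not_removes_service_Aset_of_ne hne j k)]
  have hprob : ∀ j ∈ Finset.Icc 1 (C i),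
      probJ C lam μv Λ (.s i j) = ENNReal.ofReal (μv / Λ) :=
    fun j hj => if_pos (Finset.mem_Icc.mp hj)
  rw [← Finset.sum_filter, Finset.sum_congr rfl fun j hj => hprob j (Finset.mem_filter.mp hj).1,
    Finset.sum_const, hcard, nsmul_eq_mul]

/-- Lemma 6.1: correctness of the joint-service event representation. For every detailed
state `n`, component `i` and index `k < 2^{I-i}`, exactly `n_{A_k^i}` of the service events
`r_j^i`, `1 ≤ j ≤ C i`, realize the transition `n → n − ε_{A_k^i}`; consequently, when each
service event has probability `μ/Λ`, the total probability of this transition under all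
service events is `μ · n_{A_k^i} / Λ`. -/
theorem stmt10 (I : ℕ) (hI : 1 ≤ I) (C : Fin I → ℕ) (hC : ∀ i, 1 ≤ C i)
    (n : Finset (Fin I) → ℕ) (hn : n ∈ Nspace C)
    (i : Fin I) (k : ℕ) (hk : k < 2 ^ (I - 1 - i.val)) :
    ((Finset.Icc 1 (C i)).filter (fun j =>
        (fun B => (ftil C n (.s i j) B : ℤ))
          = (fun B => (n B : ℤ) - if B = Aset i k then 1 else 0))).card
      = n (Aset i k)
    ∧ ∀ lam : Finset (Fin I) → ℝ, ∀ μv Λ : ℝ,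
      (∑ i' : Fin I, ∑ j ∈ Finset.Icc 1 (C i'),
        (if (fun B => (ftil C n (.s i' j) B : ℤ))
              = (fun B => (n B : ℤ) - if B = Aset i k then 1 else 0)
          then probJ C lam μv Λ (.s i' j) else 0))
        = (n (Aset i k) : ℝ≥0∞) * ENNReal.ofReal (μv / Λ) :=
  stmt10_general I C n hn i k hk

end ATO
end

section
/- Transition function of the supremum chain (Lemma 6.2): for every x ∈ X, every nonempty A ⊆ {1,…,I}, every i ∈ {1,…,I} and 1 ≤ j ≤ C_i: f̄(x, d_A) = x + Σ_{k∈A} 1{x_k < C_k} e_k, and f̄(x, r_j^i) = x − 1{j ≤ x̂_i} e_i, where x̂_i = max{x_i − (x_1 + ⋯ + x_{i−1}), 0}. -/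
open MeasureTheory Finset ENNReal

namespace ATO

section Aux
variable {I : ℕ}

lemma mem_Aset {i t : Fin I} {k : ℕ} :
    t ∈ Aset i k ↔ (t = i ∨ (i < t ∧ Nat.testBit k (I - 1 - t.val) = false)) := by
  simp [Aset]

lemma self_mem_Aset (i : Fin I) (k : ℕ) : i ∈ Aset i k := mem_Aset.2 (Or.inl rfl)

lemma Aset_injOn_s11 {i : Fin I} {k k' : ℕ} (hk : k < 2 ^ (I - 1 - i.val))
    (hk' : k' < 2 ^ (I - 1 - i.val)) (h : Aset i k = Aset i k') : k = k' := by
  apply Nat.eq_of_testBit_eq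
  intro p
  by_cases hp : p < I - 1 - i.val
  · have hI1 : i.val < I := i.isLt
    have htI : I - 1 - p < I := by omega
    set t : Fin I := ⟨I - 1 - p, htI⟩ with ht
    have hit : i < t := by rw [Fin.lt_def]; show i.val < I - 1 - p; omega
    have hne : t ≠ i := ne_of_gt hit
    have hpos : I - 1 - t.val = p := by show I - 1 - (I - 1 - p) = p; omega
    have h1 : (t ∈ Aset i k) ↔ Nat.testBit k p = false := by
      rw [mem_Aset, hpos]; simp [hne, hit]
    have h2 : (t ∈ Aset i k') ↔ Nat.testBit k' p = false := by
      rw [mem_Aset, hpos]; simp [hne, hit]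
    have : (Nat.testBit k p = false) ↔ (Nat.testBit k' p = false) := by
      rw [← h1, h, h2]
    cases hb : Nat.testBit k p <;> cases hb' : Nat.testBit k' p <;> simp_all
  · have hle : 2 ^ (I - 1 - i.val) ≤ 2 ^ p := Nat.pow_le_pow_right (by norm_num) (by omega)
    rw [Nat.testBit_eq_false_of_lt (lt_of_lt_of_le hk hle),
      Nat.testBit_eq_false_of_lt (lt_of_lt_of_le hk' hle)]

lemma Aset_allone (i : Fin I) : Aset i (2 ^ (I - 1 - i.val) - 1) = {i} := by
  ext t
  rw [mem_Aset, Finset.mem_singleton]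
  simp only [Nat.testBit_two_pow_sub_one, decide_eq_false_iff_not, not_lt]
  constructor
  · rintro (rfl | ⟨h1, h2⟩)
    · rfl
    · exfalso
      have := t.isLt
      rw [Fin.lt_def] at h1
      omega
  · rintro rfl; exact Or.inl rfl

lemma filter_Aset_eq {i : Fin I} :
    (Finset.range (2 ^ (I - 1 - i.val))).filter (fun l => Aset i l = {i})
      = {2 ^ (I - 1 - i.val) - 1} := by
  have hpow : 1 ≤ 2 ^ (I - 1 - i.val) := Nat.one_le_two_pow
  ext l
  simp only [Finset.mem_filter, Finset.mem_range, Finset.mem_singleton]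
  constructor
  · rintro ⟨hl, hA⟩
    exact Aset_injOn_s11 hl (by omega) (hA.trans (Aset_allone i).symm)
  · rintro rfl
    exact ⟨by omega, Aset_allone i⟩

lemma psum_eq_of {i : Fin I} {n : Finset (Fin I) → ℕ} {v : ℕ}
    (h : ∀ l, n (Aset i l) = if Aset i l = {i} then v else 0) :
    psum i n (2 ^ (I - 1 - i.val)) = v := by
  unfold psum
  rw [Finset.sum_congr rfl (fun l _ => h l), ← Finset.sum_filter,
    filter_Aset_eq, Finset.sum_singleton]

def Sfam (i : Fin I) : Finset (Finset (Fin I)) :=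
  Finset.univ.filter (fun A => i ∈ A ∧ ∀ t ∈ A, i ≤ t)

lemma Aset_mem_Sfam (i : Fin I) (l : ℕ) : Aset i l ∈ Sfam i := by
  simp only [Sfam, Finset.mem_filter, Finset.mem_univ, true_and]
  refine ⟨self_mem_Aset i l, fun t ht => ?_⟩
  rcases mem_Aset.1 ht with rfl | ⟨h, _⟩
  · exact le_refl _
  · exact le_of_lt h

lemma card_Sfam (i : Fin I) : (Sfam i).card = 2 ^ (I - 1 - i.val) := by
  have h1 : (Sfam i).card = ((Finset.Ioi i).powerset).card := by
    apply Finset.card_bij' (fun A _ => A.erase i) (fun B _ => insert i B)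
    · intro A hA
      simp only [Sfam, Finset.mem_filter, Finset.mem_univ, true_and] at hA
      exact Finset.insert_erase hA.1
    · intro B hB
      rw [Finset.mem_powerset] at hB
      apply Finset.erase_insert
      intro hi
      exact absurd (Finset.mem_Ioi.1 (hB hi)) (lt_irrefl i)
    · intro A hA
      simp only [Sfam, Finset.mem_filter, Finset.mem_univ, true_and] at hA
      rw [Finset.mem_powerset]
      intro t ht
      rw [Finset.mem_erase] at ht
      rw [Finset.mem_Ioi]
      exact lt_of_le_of_ne (hA.2 t ht.2) (Ne.symm ht.1)
    · intro B hB
      rw [Finset.mem_powerset] at hB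
      simp only [Sfam, Finset.mem_filter, Finset.mem_univ, true_and]
      refine ⟨Finset.mem_insert_self i B, fun t ht => ?_⟩
      rcases Finset.mem_insert.1 ht with rfl | ht
      · exact le_refl _
      · exact le_of_lt (Finset.mem_Ioi.1 (hB ht))
  rw [h1, Finset.card_powerset, Fin.card_Ioi]

lemma image_Aset (i : Fin I) :
    (Finset.range (2 ^ (I - 1 - i.val))).image (Aset i) = Sfam i := by
  apply Finset.eq_of_subset_of_card_le
  · intro A hA
    rcases Finset.mem_image.1 hA with ⟨l, _, rfl⟩
    exact Aset_mem_Sfam i l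
  · rw [card_Sfam, Finset.card_image_of_injOn, Finset.card_range]
    intro k hk k' hk' h
    exact Aset_injOn_s11 (Finset.mem_range.1 (Finset.mem_coe.1 hk))
      (Finset.mem_range.1 (Finset.mem_coe.1 hk')) h

lemma psum_full (i : Fin I) (n : Finset (Fin I) → ℕ) :
    psum i n (2 ^ (I - 1 - i.val)) = ∑ A ∈ Sfam i, n A := by
  rw [← image_Aset, Finset.sum_image]
  · rfl
  · intro k hk k' hk' h
    exact Aset_injOn_s11 (Finset.mem_range.1 hk) (Finset.mem_range.1 hk') h

lemma psum_full_ge (i : Fin I) (n : Finset (Fin I) → ℕ) :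
    psi n i ≤ psum i n (2 ^ (I - 1 - i.val))
      + ∑ t ∈ Finset.univ.filter (fun t => t < i), psi n t := by
  rw [psum_full]
  have hsub : Sfam i ⊆ Finset.univ.filter (fun A => i ∈ A) := by
    intro A hA
    simp only [Sfam, Finset.mem_filter, Finset.mem_univ, true_and] at hA ⊢
    exact hA.1
  have hsplit : psi n i
      = ∑ A ∈ (Finset.univ.filter (fun A => i ∈ A)) \ Sfam i, n A + ∑ A ∈ Sfam i, n A :=
    (Finset.sum_sdiff hsub).symm
  rw [hsplit]
  have hkey : ∑ A ∈ (Finset.univ.filter (fun A => i ∈ A)) \ Sfam i, n A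
      ≤ ∑ t ∈ Finset.univ.filter (fun t => t < i), psi n t := by
    set D := (Finset.univ.filter (fun A : Finset (Fin I) => i ∈ A)) \ Sfam i with hD
    have hwit : ∀ A ∈ D, ((Finset.univ.filter (fun t : Fin I => t < i)).filter
        (fun t => t ∈ A)).Nonempty := by
      intro A hA
      simp only [hD, Finset.mem_sdiff, Sfam, Finset.mem_filter, Finset.mem_univ,
        true_and, not_and, not_forall] at hA
      obtain ⟨t, ht, hti⟩ := hA.2 hA.1
      exact ⟨t, by simp [Finset.mem_filter, ht, lt_of_not_ge hti]⟩
    calc ∑ A ∈ D, n A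
        ≤ ∑ A ∈ D, ∑ t ∈ (Finset.univ.filter (fun t : Fin I => t < i)).filter
            (fun t => t ∈ A), n A := by
          apply Finset.sum_le_sum
          intro A hA
          obtain ⟨t, ht⟩ := hwit A hA
          exact Finset.single_le_sum (f := fun _ => n A) (fun _ _ => Nat.zero_le _) ht
      _ = ∑ t ∈ Finset.univ.filter (fun t : Fin I => t < i),
            ∑ A ∈ D.filter (fun A => t ∈ A), n A := by
          rw [Finset.sum_comm']
          intro A t
          simp only [Finset.mem_filter]
          tauto
      _ ≤ ∑ t ∈ Finset.univ.filter (fun t : Fin I => t < i), psi n t := by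
          apply Finset.sum_le_sum
          intro t _
          apply Finset.sum_le_sum_of_subset
          intro A hA
          simp only [hD, Finset.mem_filter, Finset.mem_sdiff] at hA ⊢
          exact ⟨Finset.mem_univ _, hA.2⟩
  omega

end Aux
section Aux2
variable {I : ℕ} {C : Fin I → ℕ}

lemma psi_ftil_d (n : Finset (Fin I) → ℕ) (A : Finset (Fin I)) (p : Fin I) :
    psi (ftil C n (.d A)) p = psi n p + (if p ∈ A ∧ psi n p < C p then 1 else 0) := by
  have hrw : psi (ftil C n (.d A)) p
      = ∑ B ∈ Finset.univ.filter (fun B => p ∈ B),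
          (n B + if B = A.filter (fun i => psi n i < C i) ∧ B.Nonempty then 1 else 0) := rfl
  rw [hrw, Finset.sum_add_distrib]
  congr 1
  by_cases hp : p ∈ A ∧ psi n p < C p
  · have hpB0 : p ∈ A.filter (fun i => psi n i < C i) := Finset.mem_filter.2 ⟨hp.1, hp.2⟩
    rw [if_pos hp]
    have : ∀ B ∈ Finset.univ.filter (fun B : Finset (Fin I) => p ∈ B),
        (if B = A.filter (fun i => psi n i < C i) ∧ B.Nonempty then 1 else 0)
          = if B = A.filter (fun i => psi n i < C i) then (1 : ℕ) else 0 := by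
      intro B hB
      have hBne : B.Nonempty := ⟨p, (Finset.mem_filter.1 hB).2⟩
      simp [hBne]
    rw [Finset.sum_congr rfl this, Finset.sum_ite_eq']
    simp [Finset.mem_filter, hpB0]
  · rw [if_neg hp]
    apply Finset.sum_eq_zero
    intro B hB
    rw [if_neg]
    rintro ⟨rfl, -⟩
    exact hp (Finset.mem_filter.1 ((Finset.mem_filter.1 hB).2))

lemma ftil_s_of_not (n : Finset (Fin I) → ℕ) {i : Fin I} {j : ℕ}
    (h : ¬ j ≤ psum i n (2 ^ (I - 1 - i.val))) : ftil C n (.s i j) = n := by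
  funext B
  show n B - (if _ ∧ _ then 1 else 0) = n B
  rw [if_neg (fun hc => h hc.1), Nat.sub_zero]

lemma psi_ftil_s_le (n : Finset (Fin I) → ℕ) (i : Fin I) (j : ℕ) (p : Fin I) :
    psi (ftil C n (.s i j)) p ≤ psi n p := by
  apply Finset.sum_le_sum
  intro B _
  exact Nat.sub_le _ _

lemma removal_core (n : Finset (Fin I) → ℕ) (i : Fin I) {j : ℕ} (hj : 1 ≤ j)
    (h : j ≤ psum i n (2 ^ (I - 1 - i.val))) :
    1 ≤ n (Aset i (sInf {k | j ≤ psum i n (k + 1)})) := by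
  have hpow : 1 ≤ 2 ^ (I - 1 - i.val) := Nat.one_le_two_pow
  set K := sInf {k | j ≤ psum i n (k + 1)} with hK
  have hne : {k | j ≤ psum i n (k + 1)}.Nonempty := by
    refine ⟨2 ^ (I - 1 - i.val) - 1, ?_⟩
    show j ≤ psum i n (2 ^ (I - 1 - i.val) - 1 + 1)
    rwa [Nat.sub_add_cancel hpow]
  have h1 : j ≤ psum i n (K + 1) := Nat.sInf_mem hne
  have h2 : psum i n K < j := by
    rcases Nat.eq_zero_or_pos K with h0 | h0
    · rw [h0]
      show psum i n 0 < j
      unfold psum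
      rw [Finset.range_zero, Finset.sum_empty]
      omega
    · have hnm : K - 1 ∉ {k | j ≤ psum i n (k + 1)} :=
        Nat.notMem_of_lt_sInf (by omega)
      simp only [Set.mem_setOf_eq, not_le] at hnm
      rwa [Nat.sub_add_cancel h0] at hnm
  have hstep : psum i n (K + 1) = psum i n K + n (Aset i K) := Finset.sum_range_succ _ _
  omega

lemma psi_ftil_s_exact (n : Finset (Fin I) → ℕ) (i : Fin I) {j : ℕ} (hj : 1 ≤ j)
    (h : j ≤ psum i n (2 ^ (I - 1 - i.val))) (p : Fin I) :
    psi (ftil C n (.s i j)) p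
      = psi n p - (if p ∈ Aset i (sInf {k | j ≤ psum i n (k + 1)}) then 1 else 0) := by
  set R := Aset i (sInf {k | j ≤ psum i n (k + 1)}) with hR
  have hnR : 1 ≤ n R := removal_core n i hj h
  have hrw : psi (ftil C n (.s i j)) p
      = ∑ B ∈ Finset.univ.filter (fun B => p ∈ B), (n B - if B = R then 1 else 0) := by
    show (∑ B ∈ Finset.univ.filter (fun B => p ∈ B),
        (n B - if j ≤ psum i n (2 ^ (I - 1 - i.val)) ∧ B = R then 1 else 0)) = _
    apply Finset.sum_congr rfl
    intro B _
    congr 1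
    simp [h]
  rw [hrw]
  by_cases hp : p ∈ R
  · rw [if_pos hp]
    have hRmem : R ∈ Finset.univ.filter (fun B : Finset (Fin I) => p ∈ B) :=
      Finset.mem_filter.2 ⟨Finset.mem_univ _, hp⟩
    rw [← Finset.add_sum_erase _ (fun B => n B - if B = R then 1 else 0) hRmem]
    have hpsi : psi n p = n R + ∑ B ∈ (Finset.univ.filter
        (fun B : Finset (Fin I) => p ∈ B)).erase R, n B :=
      (Finset.add_sum_erase _ n hRmem).symm
    have herase : ∑ B ∈ (Finset.univ.filter
        (fun B : Finset (Fin I) => p ∈ B)).erase R, (n B - if B = R then 1 else 0)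
        = ∑ B ∈ (Finset.univ.filter (fun B : Finset (Fin I) => p ∈ B)).erase R, n B := by
      apply Finset.sum_congr rfl
      intro B hB
      rw [if_neg (Finset.ne_of_mem_erase hB), Nat.sub_zero]
    rw [herase, if_pos rfl, hpsi]
    omega
  · rw [if_neg hp, Nat.sub_zero]
    apply Finset.sum_congr rfl
    intro B hB
    rw [if_neg, Nat.sub_zero]
    intro h'
    exact hp (h' ▸ (Finset.mem_filter.1 hB).2)

end Aux2
section Aux3
variable {I : ℕ} {C : Fin I → ℕ}

def cpair (x : Fin I → ℕ) (i : Fin I) (t : Fin I) : ℕ :=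
  min (x t) (x i - ∑ s ∈ Finset.univ.filter (fun s => s < t), x s)

def dval (x : Fin I → ℕ) (i : Fin I) (t : Fin I) : ℕ :=
  if t = i then x i - ∑ s ∈ Finset.univ.filter (fun s => s < i), cpair x i s
  else if t < i then x t - cpair x i t else x t

def wit2 (x : Fin I → ℕ) (i : Fin I) : Finset (Fin I) → ℕ := fun B =>
  (∑ t ∈ Finset.univ.filter (fun t => t < i), if B = {t, i} then cpair x i t else 0)
  + ∑ t, if B = {t} then dval x i t else 0

lemma cpair_sum_nat (x : Fin I → ℕ) (i : Fin I) (K : ℕ) :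
    ∑ t ∈ Finset.univ.filter (fun t : Fin I => t.val < K), cpair x i t
      = min (x i) (∑ t ∈ Finset.univ.filter (fun t : Fin I => t.val < K), x t) := by
  induction K with
  | zero => simp
  | succ K ih =>
    by_cases hK : K < I
    · have hins : Finset.univ.filter (fun t : Fin I => t.val < K + 1)
          = insert ⟨K, hK⟩ (Finset.univ.filter (fun t : Fin I => t.val < K)) := by
        ext t
        simp only [Finset.mem_filter, Finset.mem_univ, true_and, Finset.mem_insert,
          Fin.ext_iff]
        omega
      have hnot : (⟨K, hK⟩ : Fin I) ∉ Finset.univ.filter (fun t : Fin I => t.val < K) := by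
        simp
      rw [hins, Finset.sum_insert hnot, Finset.sum_insert hnot, ih]
      have hfil : Finset.univ.filter (fun s : Fin I => s < (⟨K, hK⟩ : Fin I))
          = Finset.univ.filter (fun t : Fin I => t.val < K) := by
        ext t
        simp [Fin.lt_def]
      rw [cpair, hfil]
      simp only [Nat.min_def]
      split_ifs <;> omega
    · have heq : Finset.univ.filter (fun t : Fin I => t.val < K + 1)
          = Finset.univ.filter (fun t : Fin I => t.val < K) := by
        ext t
        have := t.isLt
        simp only [Finset.mem_filter, Finset.mem_univ, true_and]
        omega
      rw [heq, ih]

lemma cpair_sum (x : Fin I → ℕ) (i : Fin I) :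
    ∑ t ∈ Finset.univ.filter (fun t : Fin I => t < i), cpair x i t
      = min (x i) (∑ t ∈ Finset.univ.filter (fun t : Fin I => t < i), x t) := by
  have hfil : Finset.univ.filter (fun t : Fin I => t < i)
      = Finset.univ.filter (fun t : Fin I => t.val < i.val) := by
    ext t
    simp only [Finset.mem_filter, Finset.mem_univ, true_and, Fin.lt_def]
  rw [hfil]
  exact cpair_sum_nat x i i.val

lemma psi_wit2 (x : Fin I → ℕ) (i : Fin I) : psi (wit2 x i) = x := by
  funext p
  show ∑ B ∈ Finset.univ.filter (fun B => p ∈ B), wit2 x i B = x p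
  unfold wit2
  rw [Finset.sum_add_distrib,
    Finset.sum_comm (s := Finset.univ.filter (fun B : Finset (Fin I) => p ∈ B))
      (t := Finset.univ.filter (fun t : Fin I => t < i)),
    Finset.sum_comm (s := Finset.univ.filter (fun B : Finset (Fin I) => p ∈ B))
      (t := (Finset.univ : Finset (Fin I)))]
  have h1 : ∀ t : Fin I,
      (∑ B ∈ Finset.univ.filter (fun B : Finset (Fin I) => p ∈ B),
        if B = {t, i} then cpair x i t else 0)
      = if p = t ∨ p = i then cpair x i t else 0 := by
    intro t
    rw [Finset.sum_ite_eq']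
    simp [Finset.mem_filter, Finset.mem_insert]
  have h2 : ∀ t : Fin I,
      (∑ B ∈ Finset.univ.filter (fun B : Finset (Fin I) => p ∈ B),
        if B = {t} then dval x i t else 0)
      = if p = t then dval x i t else 0 := by
    intro t
    rw [Finset.sum_ite_eq']
    simp [Finset.mem_filter]
  rw [Finset.sum_congr rfl (fun t _ => h1 t), Finset.sum_congr rfl (fun t _ => h2 t)]
  have h3 : (∑ t : Fin I, if p = t then dval x i t else 0) = dval x i p := by
    rw [Finset.sum_ite_eq]
    simp
  rw [h3]
  have hcle : ∑ t ∈ Finset.univ.filter (fun t : Fin I => t < i), cpair x i t ≤ x i := by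
    rw [cpair_sum]; exact Nat.min_le_left _ _
  by_cases hpi : p = i
  · subst hpi
    have : ∀ t ∈ Finset.univ.filter (fun t : Fin I => t < p),
        (if p = t ∨ p = p then cpair x p t else 0) = cpair x p t := by
      intro t _; simp
    rw [Finset.sum_congr rfl this, dval, if_pos rfl]
    have hrfl : (Finset.univ.filter (fun t : Fin I => t < p)).sum (cpair x p)
        = ∑ t ∈ Finset.univ.filter (fun t : Fin I => t < p), cpair x p t := rfl
    omega
  · have : ∀ t ∈ Finset.univ.filter (fun t : Fin I => t < i),
        (if p = t ∨ p = i then cpair x i t else 0) = if p = t then cpair x i t else 0 := by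
      intro t _; simp [hpi]
    rw [Finset.sum_congr rfl this, Finset.sum_ite_eq]
    by_cases hplt : p < i
    · rw [if_pos (show p ∈ Finset.univ.filter (fun t : Fin I => t < i) from by
          simp [hplt]), dval, if_neg hpi, if_pos hplt]
      have : cpair x i p ≤ x p := Nat.min_le_left _ _
      omega
    · rw [if_neg (show ¬ p ∈ Finset.univ.filter (fun t : Fin I => t < i) from by
          simp [hplt]), dval, if_neg hpi, if_neg hplt, zero_add]

lemma wit2_mem (x : Fin I → ℕ) (i : Fin I) (hx : x ∈ Xspace C) : wit2 x i ∈ Nspace C := by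
  constructor
  · show wit2 x i ∅ = 0
    unfold wit2
    rw [Finset.sum_eq_zero, Finset.sum_eq_zero, add_zero]
    · intro t _
      rw [if_neg (Finset.singleton_ne_empty t).symm]
    · intro t _
      rw [if_neg]
      intro h
      exact (Finset.insert_ne_empty t {i}) h.symm
  · intro p
    show psi (wit2 x i) p ≤ C p
    rw [psi_wit2]
    exact hx p

lemma wit2_Aset (x : Fin I → ℕ) (i : Fin I) (l : ℕ) :
    wit2 x i (Aset i l) = if Aset i l = {i}
      then x i - ∑ s ∈ Finset.univ.filter (fun s => s < i), cpair x i s else 0 := by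
  unfold wit2
  have h1 : (∑ t ∈ Finset.univ.filter (fun t : Fin I => t < i),
      if Aset i l = {t, i} then cpair x i t else 0) = 0 := by
    apply Finset.sum_eq_zero
    intro t ht
    rw [if_neg]
    intro hA
    have hti : t < i := (Finset.mem_filter.1 ht).2
    have : t ∈ Aset i l := hA ▸ Finset.mem_insert_self t {i}
    rcases mem_Aset.1 this with rfl | ⟨h, _⟩
    · exact absurd hti (lt_irrefl _)
    · exact absurd hti (not_lt.2 h.le)
  have h2 : (∑ t : Fin I, if Aset i l = {t} then dval x i t else 0)
      = if Aset i l = {i} then dval x i i else 0 := by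
    by_cases hA : Aset i l = {i}
    · rw [if_pos hA, hA]
      have : ∀ t : Fin I, (if ({i} : Finset (Fin I)) = {t} then dval x i t else 0)
          = if i = t then dval x i t else 0 := by
        intro t
        congr 1
        simp [Finset.singleton_inj]
      rw [Finset.sum_congr rfl (fun t _ => this t), Finset.sum_ite_eq]
      simp
    · rw [if_neg hA]
      apply Finset.sum_eq_zero
      intro t _
      rw [if_neg]
      intro h
      have hi := self_mem_Aset i l
      rw [h, Finset.mem_singleton] at hi
      exact hA (by rw [h, hi])
  rw [h1, h2, zero_add]
  by_cases hA : Aset i l = {i}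
  · rw [if_pos hA, if_pos hA, dval, if_pos rfl]
  · rw [if_neg hA, if_neg hA]

lemma psum_wit2 (x : Fin I → ℕ) (i : Fin I) :
    psum i (wit2 x i) (2 ^ (I - 1 - i.val)) = xhat x i := by
  rw [psum_eq_of (fun l => wit2_Aset x i l), cpair_sum, xhat]
  simp only [Nat.min_def]
  split_ifs <;> omega

end Aux3
section Aux4
variable {I : ℕ} {C : Fin I → ℕ}

lemma forced_removal {x : Fin I → ℕ} (n : Finset (Fin I) → ℕ) (i : Fin I) {j : ℕ}
    (hpsi : psi n = x) (hjx : j ≤ xhat x i) : j ≤ psum i n (2 ^ (I - 1 - i.val)) := by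
  have h := psum_full_ge i n
  rw [hpsi] at h
  rw [xhat] at hjx
  omega

lemma sInf_wit2 (x : Fin I → ℕ) (i : Fin I) {j : ℕ} (hjx : j ≤ xhat x i) (hj1 : 1 ≤ j) :
    Aset i (sInf {k | j ≤ psum i (wit2 x i) (k + 1)}) = {i} := by
  have hpow : 1 ≤ 2 ^ (I - 1 - i.val) := Nat.one_le_two_pow
  have hmem : 2 ^ (I - 1 - i.val) - 1 ∈ {k | j ≤ psum i (wit2 x i) (k + 1)} := by
    show j ≤ psum i (wit2 x i) (2 ^ (I - 1 - i.val) - 1 + 1)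
    rw [Nat.sub_add_cancel hpow, psum_wit2]
    exact hjx
  have hlow : ∀ k, k < 2 ^ (I - 1 - i.val) - 1 →
      k ∉ {k | j ≤ psum i (wit2 x i) (k + 1)} := by
    intro k hk
    simp only [Set.mem_setOf_eq, not_le]
    have hz : psum i (wit2 x i) (k + 1) = 0 := by
      unfold psum
      apply Finset.sum_eq_zero
      intro l hl
      rw [wit2_Aset, if_neg]
      intro hA
      have hlk := Finset.mem_range.1 hl
      have hl2 : l < 2 ^ (I - 1 - i.val) := by omega
      have := Aset_injOn_s11 hl2 (by omega) (hA.trans (Aset_allone i).symm)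
      omega
    omega
  have heq : sInf {k | j ≤ psum i (wit2 x i) (k + 1)} = 2 ^ (I - 1 - i.val) - 1 := by
    have h1 : sInf {k | j ≤ psum i (wit2 x i) (k + 1)} ≤ 2 ^ (I - 1 - i.val) - 1 :=
      Nat.sInf_le hmem
    rcases eq_or_lt_of_le h1 with h2 | h2
    · exact h2
    · exfalso
      exact hlow _ h2 (Nat.sInf_mem ⟨_, hmem⟩)
  rw [heq]
  exact Aset_allone i

end Aux4

/-- Lemma 6.2: transition function of the supremum chain. -/
theorem stmt11 (I : ℕ) (hI : 1 ≤ I) (C : Fin I → ℕ) (hC : ∀ i, 1 ≤ C i)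
    (x : Fin I → ℕ) (hx : x ∈ Xspace C) :
    (∀ A : Finset (Fin I), A.Nonempty →
      fbar C x (.d A) = fun k => x k + if k ∈ A ∧ x k < C k then 1 else 0)
    ∧ (∀ (i : Fin I) (j : ℕ), 1 ≤ j → j ≤ C i →
      fbar C x (.s i j) = fun k => x k - if k = i ∧ j ≤ xhat x i then 1 else 0) := by
  constructor
  · intro A hA
    funext p
    have hval : ∀ n, n ∈ Nspace C ∧ psi n = x →
        psi (ftil C n (.d A)) p = x p + (if p ∈ A ∧ x p < C p then 1 else 0) := by
      rintro n ⟨hn, hpsi⟩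
      rw [psi_ftil_d, hpsi]
    show sSup _ = _
    apply IsGreatest.csSup_eq
    constructor
    · have hw : wit2 x ⟨0, hI⟩ ∈ {n | n ∈ Nspace C ∧ psi n = x} :=
        ⟨wit2_mem x ⟨0, hI⟩ hx, psi_wit2 x ⟨0, hI⟩⟩
      exact ⟨wit2 x ⟨0, hI⟩, hw, hval _ hw⟩
    · rintro y ⟨n, hn, rfl⟩
      exact le_of_eq (hval n hn)
  · intro i j hj hjC
    funext p
    have hub : ∀ n, n ∈ Nspace C ∧ psi n = x →
        psi (ftil C n (.s i j)) p ≤ x p - (if p = i ∧ j ≤ xhat x i then 1 else 0) := by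
      rintro n ⟨hn, hpsi⟩
      by_cases hcd : p = i ∧ j ≤ xhat x i
      · obtain ⟨rfl, hjx⟩ := hcd
        have hps : j ≤ psum p n (2 ^ (I - 1 - p.val)) := forced_removal n p hpsi hjx
        rw [psi_ftil_s_exact n p hj hps p, hpsi,
          if_pos (self_mem_Aset p _), if_pos ⟨rfl, hjx⟩]
      · rw [if_neg hcd, Nat.sub_zero]
        calc psi (ftil C n (.s i j)) p ≤ psi n p := psi_ftil_s_le n i j p
          _ = x p := by rw [hpsi]
    have hw : wit2 x i ∈ {n | n ∈ Nspace C ∧ psi n = x} :=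
      ⟨wit2_mem x i hx, psi_wit2 x i⟩
    have hweq : psi (ftil C (wit2 x i) (.s i j)) p
        = x p - (if p = i ∧ j ≤ xhat x i then 1 else 0) := by
      by_cases hjx : j ≤ xhat x i
      · have hps : j ≤ psum i (wit2 x i) (2 ^ (I - 1 - i.val)) := by
          rw [psum_wit2]; exact hjx
        rw [psi_ftil_s_exact (wit2 x i) i hj hps p, psi_wit2, sInf_wit2 x i hjx hj]
        by_cases hpi : p = i
        · subst hpi
          rw [if_pos (Finset.mem_singleton_self p), if_pos ⟨rfl, hjx⟩]
        · rw [if_neg (fun h => hpi (Finset.mem_singleton.1 h)),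
            if_neg (fun h => hpi h.1)]
      · have hps : ¬ j ≤ psum i (wit2 x i) (2 ^ (I - 1 - i.val)) := by
          rw [psum_wit2]; exact hjx
        rw [ftil_s_of_not (wit2 x i) hps, psi_wit2,
          if_neg (fun h => hjx h.2), Nat.sub_zero]
    show sSup _ = _
    apply IsGreatest.csSup_eq
    constructor
    · exact ⟨wit2 x i, hw, hweq⟩
    · rintro y ⟨n, hn, rfl⟩
      exact hub n hn

end ATO
end
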